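/- arXiv:2507.12038 — 5 statements merged into one kernel-verified Lean document; each statement's English description precedes it below -/
import Mathlib

section
/- Let Δ, c, d be natural numbers with c ≥ 1 and c·(d+1) > Δ. Then every finite simple graph with maximum degree at most Δ admits a coloring f : V → Fin c such that every vertex v has at most d neighbors u with f(u) = f(v). -/
/-- If `c ≥ 1` and `c·(d+1) > Δ`, then every finite simple graph with maximum
degree at most `Δ` admits a `c`-coloring where every vertex has at most `d`
neighbors of its own color (a `d`-defective `c`-coloring). -/
theorem defective_coloring_exists {V : Type*} [Fintype V] [DecidableEq V]
    (G : SimpleGraph V) [DecidableRel G.Adj] (Δ c d : ℕ)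
    (hc : 1 ≤ c) (hcd : Δ < c * (d + 1)) (hΔ : ∀ v, G.degree v ≤ Δ) :
    ∃ f : V → Fin c, ∀ v : V,
      ((G.neighborFinset v).filter (fun u => f u = f v)).card ≤ d := by
  classical
  haveI : Nonempty (Fin c) := ⟨⟨0, hc⟩⟩
  set M : (V → Fin c) → ℕ :=
    fun f => ∑ w, ((G.neighborFinset w).filter (fun u => f u = f w)).card with hMdef
  obtain ⟨f, -, hfmin⟩ := Finset.exists_min_image (Finset.univ : Finset (V → Fin c)) M
    ⟨Classical.arbitrary _, Finset.mem_univ _⟩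
  refine ⟨f, fun v => ?_⟩
  by_contra hv
  push_neg at hv
  set s := G.neighborFinset v with hs
  -- find a color k with at most d neighbors of v colored k
  have hvs : v ∉ s := SimpleGraph.notMem_neighborFinset_self G v
  have hpart : s.card = ∑ k : Fin c, (s.filter (fun u => f u = k)).card :=
    Finset.card_eq_sum_card_fiberwise (fun x _ => Finset.mem_univ (f x))
  have hk : ∃ k : Fin c, (s.filter (fun u => f u = k)).card ≤ d := by
    by_contra h
    push_neg at h
    have h1 : c * (d + 1) ≤ ∑ k : Fin c, (s.filter (fun u => f u = k)).card := by
      calc c * (d + 1) = ∑ _k : Fin c, (d + 1) := by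
            simp [Finset.sum_const, mul_comm]
        _ ≤ _ := Finset.sum_le_sum (fun k _ => h k)
    have h2 : s.card ≤ Δ := by
      simpa [hs, SimpleGraph.card_neighborFinset_eq_degree] using hΔ v
    omega
  obtain ⟨k, hk⟩ := hk
  set g : V → Fin c := Function.update f v k with hg
  -- the base count for a neighbor w of v, ignoring v
  set B : V → ℕ :=
    fun w => (((G.neighborFinset w).erase v).filter (fun u => f u = f w)).card with hB
  -- on the complement of insert v s, nothing changes
  have hcompl : ∀ w ∈ (insert v s)ᶜ,
      ((G.neighborFinset w).filter (fun u => g u = g w)).card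
        = ((G.neighborFinset w).filter (fun u => f u = f w)).card := by
    intro w hw
    simp only [Finset.mem_compl, Finset.mem_insert, not_or] at hw
    obtain ⟨hwv, hws⟩ := hw
    have hvw : v ∉ G.neighborFinset w := by
      intro hmem
      have hadj : G.Adj w v := (SimpleGraph.mem_neighborFinset _ _ _).mp hmem
      exact hws ((SimpleGraph.mem_neighborFinset _ _ _).mpr hadj.symm)
    congr 1
    apply Finset.filter_congr
    intro u hu
    have huv : u ≠ v := fun h => hvw (h ▸ hu)
    simp [hg, Function.update_of_ne huv, Function.update_of_ne hwv]
  -- for neighbors w of v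
  have hnbrf : ∀ w ∈ s, ((G.neighborFinset w).filter (fun u => f u = f w)).card
      = B w + (if f v = f w then 1 else 0) := by
    intro w hw
    have hvw : v ∈ G.neighborFinset w := by
      rw [SimpleGraph.mem_neighborFinset, SimpleGraph.adj_comm]
      rwa [hs, SimpleGraph.mem_neighborFinset] at hw
    rw [← Finset.insert_erase hvw, Finset.filter_insert]
    split <;> simp [hB, Finset.card_insert_of_notMem, Finset.notMem_erase]
  have hnbrg : ∀ w ∈ s, ((G.neighborFinset w).filter (fun u => g u = g w)).card
      = B w + (if k = f w then 1 else 0) := by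
    intro w hw
    have hwv : w ≠ v := fun h => hvs (h ▸ hw)
    have hvw : v ∈ G.neighborFinset w := by
      rw [SimpleGraph.mem_neighborFinset, SimpleGraph.adj_comm]
      rwa [hs, SimpleGraph.mem_neighborFinset] at hw
    have hgw : g w = f w := Function.update_of_ne hwv _ _
    rw [← Finset.insert_erase hvw, Finset.filter_insert]
    have hbase : (((G.neighborFinset w).erase v).filter (fun u => g u = f w)).card = B w := by
      rw [hB]
      congr 1
      apply Finset.filter_congr
      intro u hu
      have huv : u ≠ v := Finset.ne_of_mem_erase hu
      simp [hg, Function.update_of_ne huv]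
    have hgv : g v = k := Function.update_self _ _ _
    rw [hgv, hgw]
    split <;> simp [hbase, Finset.card_insert_of_notMem, Finset.notMem_erase]
  -- counts at v itself
  have hNvf : d + 1 ≤ ((G.neighborFinset v).filter (fun u => f u = f v)).card := hv
  have hNvg : ((G.neighborFinset v).filter (fun u => g u = g v)).card ≤ d := by
    have : ((G.neighborFinset v).filter (fun u => g u = g v)).card
        = (s.filter (fun u => f u = k)).card := by
      congr 1
      apply Finset.filter_congr
      intro u hu
      have huv : u ≠ v := fun h => hvs (h ▸ hu)
      simp [hg, Function.update_of_ne huv, Function.update_self]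
    omega
  -- sums of indicators over s
  have hsumf : ∑ w ∈ s, (if f v = f w then 1 else 0)
      = ((G.neighborFinset v).filter (fun u => f u = f v)).card := by
    rw [Finset.card_filter]
    exact Finset.sum_congr rfl (fun w _ => by simp [eq_comm])
  have hsumg : ∑ w ∈ s, (if k = f w then 1 else 0) = (s.filter (fun u => f u = k)).card := by
    rw [Finset.card_filter]
    exact Finset.sum_congr rfl (fun w _ => by simp [eq_comm])
  -- assemble
  have hsplit : ∀ h : V → ℕ, ∑ w, h w = h v + ∑ w ∈ s, h w + ∑ w ∈ (insert v s)ᶜ, h w := by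
    intro h
    rw [← Finset.sum_add_sum_compl (insert v s) h, Finset.sum_insert hvs]
  have hMf : M f = ((G.neighborFinset v).filter (fun u => f u = f v)).card
      + (∑ w ∈ s, B w + ((G.neighborFinset v).filter (fun u => f u = f v)).card)
      + ∑ w ∈ (insert v s)ᶜ, ((G.neighborFinset w).filter (fun u => f u = f w)).card := by
    simp only [hMdef]
    rw [hsplit]
    congr 1
    congr 1
    rw [Finset.sum_congr rfl hnbrf, Finset.sum_add_distrib, hsumf]
  have hMg : M g = ((G.neighborFinset v).filter (fun u => g u = g v)).card
      + (∑ w ∈ s, B w + (s.filter (fun u => f u = k)).card)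
      + ∑ w ∈ (insert v s)ᶜ, ((G.neighborFinset w).filter (fun u => f u = f w)).card := by
    simp only [hMdef]
    rw [hsplit]
    congr 1
    · congr 1
      rw [Finset.sum_congr rfl hnbrg, Finset.sum_add_distrib, hsumg]
    · exact Finset.sum_congr rfl hcompl
  have hlt : M g < M f := by rw [hMf, hMg]; omega
  exact absurd (hfmin g (Finset.mem_univ _)) (not_le.mpr hlt)
end

section
/- Let n ≥ 2, let d_1, …, d_n be arbitrary real numbers, let β > 0 and c ≥ 0, and let λ_1, …, λ_n be independent random variables, each exponentially distributed with rate β. Set X_i = d_i − λ_i and m = min_i X_i. Then the probability that there exist indices i ≠ j with X_i ≤ m + c and X_j ≤ m + c (i.e., that the smallest and second-smallest of the values X_1, …, X_n are within c of each other) is at most β·c. -/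
/-!
Fix `i` and condition on the `λ j`, `j ≠ i`. Then "`X i` is a minimum" is the event `λ i ≥ a` and
"`X i` lies below every other `X j` by more than `c`" is the event `λ i > a + c`, for a threshold
`a = minThreshold d i λ` determined by the other variables. By memorylessness of the exponential
law the second event has at least `e^{-βc}` times the probability of the first. The first events
cover the sample space and the second are pairwise disjoint, so with probability at least `e^{-βc}`
the minimum is separated from all other values by more than `c`; hence the event in question has
probability at most `1 - e^{-βc} ≤ βc`.
-/

open MeasureTheory ProbabilityTheory Set Function Real Filter Topology
open scoped ENNReal

section Memoryless

variable {κ : Measure ℝ} [IsProbabilityMeasure κ] {β : ℝ}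

lemma measure_Ici_le_ofReal_exp
    (hκ : ∀ t, 0 ≤ t → κ (Ioi t) = ENNReal.ofReal (exp (-β * t))) (a : ℝ) :
    κ (Ici a) ≤ ENNReal.ofReal (exp (-β * max a 0)) := by
  rcases le_or_gt a 0 with ha | ha
  · simpa [max_eq_right ha] using prob_le_one
  · rw [max_eq_left ha.le]
    have hcont : Tendsto (fun s => ENNReal.ofReal (exp (-β * s))) (𝓝[<] a)
        (𝓝 (ENNReal.ofReal (exp (-β * a)))) :=
      ((ENNReal.continuous_ofReal.comp (by fun_prop)).tendsto a).mono_left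
        nhdsWithin_le_nhds
    refine ge_of_tendsto hcont ?_
    filter_upwards [Ioo_mem_nhdsLT ha] with s hs
    rw [← hκ s hs.1.le]
    exact measure_mono (Ici_subset_Ioi.2 hs.2)

lemma ofReal_exp_mul_measure_Ici_le
    (hκ : ∀ t, 0 ≤ t → κ (Ioi t) = ENNReal.ofReal (exp (-β * t))) {c : ℝ} (hc : 0 ≤ c) (a : ℝ) :
    ENNReal.ofReal (exp (-β * c)) * κ (Ici a) ≤ κ (Ioi (a + c)) :=
  calc ENNReal.ofReal (exp (-β * c)) * κ (Ici a)
      ≤ ENNReal.ofReal (exp (-β * c)) * ENNReal.ofReal (exp (-β * max a 0)) := by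
        gcongr; exact measure_Ici_le_ofReal_exp hκ a
    _ = κ (Ioi (max a 0 + c)) := by
        rw [hκ _ (by positivity), ← ENNReal.ofReal_mul (exp_nonneg _), ← exp_add]
        ring_nf
    _ ≤ κ (Ioi (a + c)) := measure_mono (Ioi_subset_Ioi (by gcongr; exact le_max_left a 0))

end Memoryless

lemma one_sub_ofReal_exp_neg_le {x : ℝ} (hx : 0 ≤ x) :
    1 - ENNReal.ofReal (exp (-x)) ≤ ENNReal.ofReal x := by
  rw [tsub_le_iff_right, ← ENNReal.ofReal_add hx (exp_nonneg _), ← ENNReal.ofReal_one]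
  exact ENNReal.ofReal_le_ofReal (by linarith [one_sub_le_exp_neg x])

lemma mul_measure_pi_le_of_forall_update {ι : Type*} [Fintype ι] [DecidableEq ι]
    {X : ι → Type*} [∀ i, MeasurableSpace (X i)] (μ : ∀ i, Measure (X i))
    [∀ i, SigmaFinite (μ i)] (i : ι) {S G : Set (∀ i, X i)} (hS : MeasurableSet S)
    (hG : MeasurableSet G) (r : ℝ≥0∞)
    (h : ∀ x, r * μ i (update x i ⁻¹' S) ≤ μ i (update x i ⁻¹' G)) :
    r * Measure.pi μ S ≤ Measure.pi μ G := by
  have hSi : Measurable (S.indicator (1 : (∀ i, X i) → ℝ≥0∞)) := measurable_const.indicator hS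
  rw [← lintegral_indicator_one hS, ← lintegral_indicator_one hG, ← lintegral_const_mul _ hSi]
  refine lintegral_le_of_lmarginal_le {i} (hSi.const_mul r) (measurable_const.indicator hG)
    fun x => ?_
  have hpre (T : Set (∀ i, X i)) (t : X i) :
      T.indicator 1 (update x i t) = (update x i ⁻¹' T).indicator (1 : X i → ℝ≥0∞) t := rfl
  have hSx := hS.preimage (measurable_update x (a := i))
  have hGx := hG.preimage (measurable_update x (a := i))
  simp only [lmarginal_singleton, hpre]
  rw [lintegral_const_mul r (measurable_one.indicator hSx), lintegral_indicator_one hSx,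
    lintegral_indicator_one hGx]
  exact h x

section MinThreshold

variable {ι : Type*} (d : ι → ℝ)

noncomputable def minThreshold (i : ι) (x : ι → ℝ) : ℝ :=
  ⨆ j : {j // j ≠ i}, (x j + (d i - d j))

variable {d}

lemma minThreshold_update_self [DecidableEq ι] (i : ι) (x : ι → ℝ) (t : ℝ) :
    minThreshold d i (update x i t) = minThreshold d i x := by
  simp only [minThreshold]
  exact iSup_congr fun j => by rw [update_of_ne j.2]

variable [Finite ι]

lemma measurable_minThreshold (i : ι) : Measurable (minThreshold d i) :=
  Measurable.iSup fun j => (measurable_pi_apply (j : ι)).add_const _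

variable [Nontrivial ι]

lemma minThreshold_le_iff {i : ι} {x : ι → ℝ} {t : ℝ} :
    minThreshold d i x ≤ t ↔ ∀ j ≠ i, d i - t ≤ d j - x j := by
  have : Nonempty {j // j ≠ i} := nonempty_subtype.2 (exists_ne i)
  rw [minThreshold, ciSup_le_iff (Finite.bddAbove_range _), Subtype.forall]
  refine forall₂_congr fun j _ => ?_
  constructor <;> intro h <;> linarith

lemma minThreshold_add_lt_iff {i : ι} {x : ι → ℝ} {c t : ℝ} :
    minThreshold d i x + c < t ↔ ∀ j ≠ i, d i - t + c < d j - x j := by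
  have : Nonempty {j // j ≠ i} := nonempty_subtype.2 (exists_ne i)
  obtain ⟨k, hk⟩ := exists_eq_ciSup_of_finite (f := fun j : {j // j ≠ i} => x j + (d i - d j))
  rw [minThreshold, ← hk]
  refine ⟨fun h j hj => ?_, fun h => by linarith [h k k.2]⟩
  have := (le_ciSup (Finite.bddAbove_range _) (⟨j, hj⟩ : {j // j ≠ i})).trans_eq hk.symm
  simp only at this
  linarith

lemma iUnion_setOf_minThreshold_le : ⋃ i, {x | minThreshold d i x ≤ x i} = univ := by
  refine eq_univ_of_forall fun x => mem_iUnion.2 ?_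
  obtain ⟨i, hi⟩ := Finite.exists_min fun i => d i - x i
  exact ⟨i, minThreshold_le_iff.2 fun j _ => hi j⟩

lemma pairwise_disjoint_setOf_minThreshold_add_lt {c : ℝ} (hc : 0 ≤ c) :
    Pairwise (Disjoint on fun i => {x | minThreshold d i x + c < x i}) := by
  intro i j hij
  refine disjoint_left.2 fun x hi hj => ?_
  have := minThreshold_add_lt_iff.1 hi j hij.symm
  have := minThreshold_add_lt_iff.1 hj i hij
  linarith

end MinThreshold

lemma eq_of_le_iInf_add_of_forall_add_lt {ι : Type*} [Finite ι] {X : ι → ℝ} {c : ℝ} {i j : ι}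
    (hi : ∀ k ≠ i, X i + c < X k) (hj : X j ≤ (⨅ l, X l) + c) : j = i := by
  by_contra hji
  have := ciInf_le (Finite.bddBelow_range X) i
  linarith [hi j hji]

section ExponentialProduct

variable {ι : Type*} [Fintype ι] [DecidableEq ι] [Nontrivial ι] {κ : ι → Measure ℝ}
  [∀ i, IsProbabilityMeasure (κ i)] {β c : ℝ}

lemma ofReal_exp_le_measure_pi_iUnion_minThreshold_add_lt
    (hκ : ∀ i, ∀ t, 0 ≤ t → κ i (Ioi t) = ENNReal.ofReal (exp (-β * t))) (hc : 0 ≤ c)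
    (d : ι → ℝ) :
    ENNReal.ofReal (exp (-β * c)) ≤ Measure.pi κ (⋃ i, {x | minThreshold d i x + c < x i}) := by
  set r := ENNReal.ofReal (exp (-β * c))
  have hS i : MeasurableSet {x : ι → ℝ | minThreshold d i x ≤ x i} :=
    measurableSet_le (measurable_minThreshold i) (measurable_pi_apply i)
  have hG i : MeasurableSet {x : ι → ℝ | minThreshold d i x + c < x i} :=
    measurableSet_lt ((measurable_minThreshold i).add_const c) (measurable_pi_apply i)
  have hstep i : r * Measure.pi κ {x | minThreshold d i x ≤ x i} ≤
      Measure.pi κ {x | minThreshold d i x + c < x i} :=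
    mul_measure_pi_le_of_forall_update κ i (hS i) (hG i) r fun x => by
      simp only [preimage, mem_ofPred_eq, update_self, minThreshold_update_self]
      exact ofReal_exp_mul_measure_Ici_le (hκ i) hc (minThreshold d i x)
  calc r = r * Measure.pi κ (⋃ i, {x | minThreshold d i x ≤ x i}) := by
        rw [iUnion_setOf_minThreshold_le, measure_univ, mul_one]
    _ ≤ r * ∑ i, Measure.pi κ {x | minThreshold d i x ≤ x i} := by
        gcongr; exact measure_iUnion_fintype_le _ _
    _ = ∑ i, r * Measure.pi κ {x | minThreshold d i x ≤ x i} := Finset.mul_sum _ _ _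
    _ ≤ ∑ i, Measure.pi κ {x | minThreshold d i x + c < x i} := Finset.sum_le_sum fun i _ => hstep i
    _ = Measure.pi κ (⋃ i, {x | minThreshold d i x + c < x i}) := by
        rw [measure_iUnion (pairwise_disjoint_setOf_minThreshold_add_lt hc) hG, tsum_fintype]

lemma measure_pi_two_le_iInf_add_le
    (hκ : ∀ i, ∀ t, 0 ≤ t → κ i (Ioi t) = ENNReal.ofReal (exp (-β * t))) (hc : 0 ≤ c)
    (d : ι → ℝ) :
    Measure.pi κ {x | ∃ i j, i ≠ j ∧ d i - x i ≤ (⨅ l, (d l - x l)) + c ∧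
      d j - x j ≤ (⨅ l, (d l - x l)) + c} ≤ 1 - ENNReal.ofReal (exp (-β * c)) := by
  set G := ⋃ k, {x : ι → ℝ | minThreshold d k x + c < x k}
  have hsub : {x : ι → ℝ | ∃ i j, i ≠ j ∧ d i - x i ≤ (⨅ l, (d l - x l)) + c ∧
      d j - x j ≤ (⨅ l, (d l - x l)) + c} ⊆ Gᶜ := by
    rintro x ⟨i, j, hij, hi, hj⟩ hx
    obtain ⟨k, hk⟩ := mem_iUnion.1 hx
    have hgap : ∀ l ≠ k, d k - x k + c < d l - x l := minThreshold_add_lt_iff.1 hk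
    exact hij ((eq_of_le_iInf_add_of_forall_add_lt (X := d - x) hgap hi).trans
      (eq_of_le_iInf_add_of_forall_add_lt (X := d - x) hgap hj).symm)
  have hG : MeasurableSet G := .iUnion fun k =>
    measurableSet_lt ((measurable_minThreshold k).add_const c) (measurable_pi_apply k)
  calc _ ≤ Measure.pi κ Gᶜ := measure_mono hsub
    _ = 1 - Measure.pi κ G := prob_compl_eq_one_sub hG
    _ ≤ 1 - ENNReal.ofReal (exp (-β * c)) :=
        tsub_le_tsub_left (ofReal_exp_le_measure_pi_iUnion_minThreshold_add_lt hκ hc d) 1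

end ExponentialProduct

/-- Let `d 1, …, d n` be arbitrary reals and `λ 1, …, λ n` independent
exponential random variables of rate `β`. Set `X i = d i − λ i` and
`m = min_i X i`. Then the probability that two distinct indices have
`X i ≤ m + c` (the smallest and second-smallest values of the `X i` are within
`c` of each other) is at most `β·c`. -/
theorem mpx_second_smallest {Ω : Type*} [MeasurableSpace Ω]
    (μ : Measure Ω) [IsProbabilityMeasure μ]
    (n : ℕ) (hn : 2 ≤ n) (d : Fin n → ℝ) (β c : ℝ) (hβ : 0 < β) (hc : 0 ≤ c)
    (lam : Fin n → Ω → ℝ) (hmeas : ∀ i, Measurable (lam i))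
    (hindep : iIndepFun lam μ)
    (hexp : ∀ i, ∀ t : ℝ, 0 ≤ t →
      μ {ω | t < lam i ω} = ENNReal.ofReal (Real.exp (-β * t))) :
    μ {ω | ∃ i j : Fin n, i ≠ j ∧
        d i - lam i ω ≤ (⨅ l : Fin n, (d l - lam l ω)) + c ∧
        d j - lam j ω ≤ (⨅ l : Fin n, (d l - lam l ω)) + c} ≤
      ENNReal.ofReal (β * c) := by
  have : Nontrivial (Fin n) := Fin.nontrivial_iff_two_le.2 hn
  have (i : Fin n) : IsProbabilityMeasure (μ.map (lam i)) :=
    Measure.isProbabilityMeasure_map (hmeas i).aemeasurable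
  have hκ i t (ht : 0 ≤ t) : μ.map (lam i) (Ioi t) = ENNReal.ofReal (exp (-β * t)) := by
    rw [Measure.map_apply (hmeas i) measurableSet_Ioi]
    exact hexp i t ht
  have hlaw : μ.map (fun ω i => lam i ω) = Measure.pi fun i => μ.map (lam i) :=
    hindep.map_fun_eq_pi_map fun i => (hmeas i).aemeasurable
  calc _ ≤ μ.map (fun ω i => lam i ω) {x | ∃ i j, i ≠ j ∧ d i - x i ≤ (⨅ l, (d l - x l)) + c ∧
          d j - x j ≤ (⨅ l, (d l - x l)) + c} :=
        Measure.le_map_apply (measurable_pi_lambda _ hmeas).aemeasurable _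
    _ ≤ 1 - ENNReal.ofReal (exp (-(β * c))) := by
        rw [hlaw, ← neg_mul]; exact measure_pi_two_le_iInf_add_le hκ hc d
    _ ≤ ENNReal.ofReal (β * c) := one_sub_ofReal_exp_neg_le (mul_nonneg hβ.le hc)
end

section
/- Let G = (V, E) be a finite connected simple graph, let β > 0, and let (λ_u)_{u ∈ V} be independent random variables, each exponentially distributed with rate β. For each vertex w, call u ∈ V a center of w if u minimizes u' ↦ dist(u', w) − λ(u') over V. Then for every vertex v and every integer k ≥ 0, with probability at least 1 − 2βk there is a single vertex u that is the unique center of every vertex w with dist(v, w) ≤ k. -/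
/-!
Measure shifted distances from the fixed vertex `v`. Some vertex `u` minimizes
`dist(·, v) − λ`; conditionally on the other shifts, `u` does so exactly when `λ u` exceeds a
threshold determined by them, and by memorylessness of the exponential law `λ u` then clears that
threshold by more than `2k` with probability at least `e^{−2βk}`. These events are disjoint in `u`,
so some `u` beats every other vertex by a margin `> 2k` with probability at least
`e^{−2βk} ≥ 1 − 2βk`. Moving from `v` to a vertex `w` with `dist(v, w) ≤ k` changes each shifted
distance by at most `k`, so such a `u` remains the unique center of `w`.
-/

open MeasureTheory ProbabilityTheory Filter Set

def IsMinWithGap {ι : Type*} (f : ι → ℝ) (t : ℝ) (u : ι) : Prop :=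
  ∀ u', u' ≠ u → f u + t < f u'

theorem IsMinWithGap.eq {ι : Type*} {f : ι → ℝ} {t : ℝ} {u u' : ι} (ht : 0 ≤ t)
    (hu : IsMinWithGap f t u) (hu' : IsMinWithGap f t u') : u = u' := by
  by_contra hne
  linarith [hu u' (Ne.symm hne), hu' u hne]

section Exponential

variable {β : ℝ}

theorem measure_Ici_le_ofReal_exp_s7 (ν : Measure ℝ) [IsProbabilityMeasure ν] (hβ : 0 ≤ β)
    (hν : ∀ s, 0 ≤ s → ν (Ioi s) = ENNReal.ofReal (Real.exp (-β * s))) (y : ℝ) :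
    ν (Ici y) ≤ ENNReal.ofReal (Real.exp (-β * y)) := by
  rcases le_or_gt y 0 with hy | hy
  · exact prob_le_one.trans (ENNReal.one_le_ofReal.2 (Real.one_le_exp (by nlinarith)))
  · have hlim : Tendsto (fun s => ENNReal.ofReal (Real.exp (-β * s))) (nhdsWithin y (Iio y))
        (nhds (ENNReal.ofReal (Real.exp (-β * y)))) :=
      (ENNReal.continuous_ofReal.comp (Real.continuous_exp.comp (continuous_const_mul (-β)))
        |>.tendsto y).mono_left nhdsWithin_le_nhds
    refine ge_of_tendsto hlim ?_
    filter_upwards [Ioo_mem_nhdsLT hy] with s hs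
    rw [← hν s hs.1.le]
    exact measure_mono (Ici_subset_Ioi.2 hs.2)

/-- Memorylessness of the exponential tail. -/
theorem ofReal_exp_mul_measure_Ici_le_s7 (ν : Measure ℝ) [IsProbabilityMeasure ν] (hβ : 0 ≤ β)
    (hν : ∀ s, 0 ≤ s → ν (Ioi s) = ENNReal.ofReal (Real.exp (-β * s))) {t : ℝ} (ht : 0 ≤ t)
    (y : ℝ) : ENNReal.ofReal (Real.exp (-β * t)) * ν (Ici y) ≤ ν (Ioi (y + t)) := by
  rcases le_or_gt 0 y with hy | hy
  · calc ENNReal.ofReal (Real.exp (-β * t)) * ν (Ici y)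
        ≤ ENNReal.ofReal (Real.exp (-β * t)) * ENNReal.ofReal (Real.exp (-β * y)) :=
          mul_le_mul_right (measure_Ici_le_ofReal_exp_s7 ν hβ hν y) _
      _ = ν (Ioi (y + t)) := by
          rw [hν _ (by linarith), ← ENNReal.ofReal_mul (Real.exp_nonneg _), ← Real.exp_add]
          ring_nf
  · calc ENNReal.ofReal (Real.exp (-β * t)) * ν (Ici y)
        ≤ ENNReal.ofReal (Real.exp (-β * t)) := mul_le_of_le_one_right' prob_le_one
      _ = ν (Ioi t) := (hν t ht).symm
      _ ≤ ν (Ioi (y + t)) := measure_mono (Ioi_subset_Ioi (by linarith))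

end Exponential

theorem ProbabilityTheory.IndepFun.measure_preimage_eq_lintegral {Ω α γ : Type*}
    [MeasurableSpace Ω] [MeasurableSpace α] [MeasurableSpace γ] {μ : Measure Ω} [IsFiniteMeasure μ]
    {Y : Ω → α} {X : Ω → γ} (hY : Measurable Y) (hX : Measurable X) (hind : IndepFun Y X μ)
    {s : Set (α × γ)} (hs : MeasurableSet s) :
    μ {ω | (Y ω, X ω) ∈ s} = ∫⁻ y, μ.map X (Prod.mk y ⁻¹' s) ∂μ.map Y := by
  rw [← Measure.prod_apply hs,
    ← (indepFun_iff_map_prod_eq_prod_map_map hY.aemeasurable hX.aemeasurable).1 hind,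
    Measure.map_apply (hY.prodMk hX) hs]
  rfl

section Independence

variable {Ω : Type*} [MeasurableSpace Ω] {μ : Measure Ω} [IsProbabilityMeasure μ] {β : ℝ}

theorem ofReal_exp_mul_measure_le_le_measure_add_lt (hβ : 0 ≤ β) {X Y : Ω → ℝ}
    (hX : Measurable X) (hY : Measurable Y) (hind : IndepFun Y X μ)
    (hexp : ∀ s, 0 ≤ s → μ {ω | s < X ω} = ENNReal.ofReal (Real.exp (-β * s)))
    {t : ℝ} (ht : 0 ≤ t) :
    ENNReal.ofReal (Real.exp (-β * t)) * μ {ω | Y ω ≤ X ω} ≤ μ {ω | Y ω + t < X ω} := by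
  have : IsProbabilityMeasure (μ.map X) := Measure.isProbabilityMeasure_map hX.aemeasurable
  have hν : ∀ s, 0 ≤ s → μ.map X (Ioi s) = ENNReal.ofReal (Real.exp (-β * s)) := fun s hs => by
    rw [Measure.map_apply hX measurableSet_Ioi]
    exact hexp s hs
  have hle := hind.measure_preimage_eq_lintegral hY hX
    (measurableSet_le measurable_fst measurable_snd)
  have hlt := hind.measure_preimage_eq_lintegral hY hX
    (measurableSet_lt (measurable_fst.add_const t) measurable_snd)
  simp only [mem_ofPred_eq] at hle hlt
  rw [hle, hlt, ← lintegral_const_mul' _ _ ENNReal.ofReal_ne_top]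
  exact lintegral_mono fun y => ofReal_exp_mul_measure_Ici_le_s7 _ hβ hν ht y

variable {ι : Type*} [Fintype ι] (X : ι → Ω → ℝ) (a : ι → ℝ) {t : ℝ}

/-- `u` wins by more than `t` exactly when `X u` exceeds by more than `t` the threshold `Y`
set by the other variables, which is independent of `X u`. -/
theorem ofReal_exp_mul_measure_isMin_le_measure_isMinWithGap (hX : ∀ i, Measurable (X i))
    (hindep : iIndepFun X μ)
    (hexp : ∀ i, ∀ s, 0 ≤ s → μ {ω | s < X i ω} = ENNReal.ofReal (Real.exp (-β * s)))
    (hβ : 0 ≤ β) (ht : 0 ≤ t) (u : ι) :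
    ENNReal.ofReal (Real.exp (-β * t)) * μ {ω | ∀ i, a u - X u ω ≤ a i - X i ω} ≤
      μ {ω | IsMinWithGap (fun i => a i - X i ω) t u} := by
  classical
  set S := Finset.univ.erase u
  have hmem : ∀ {i}, i ≠ u → i ∈ S := fun hi => Finset.mem_erase.2 ⟨hi, Finset.mem_univ _⟩
  rcases S.eq_empty_or_nonempty with hS | hS
  · have hall : {ω | IsMinWithGap (fun i => a i - X i ω) t u} = univ :=
      eq_univ_of_forall fun ω i hi => absurd (hS ▸ hmem hi) (Finset.notMem_empty i)
    rw [hall, measure_univ]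
    exact mul_le_one' (ENNReal.ofReal_le_one.2 (Real.exp_le_one_iff.2 (by nlinarith))) prob_le_one
  set φ : (S → ℝ) → ℝ := S.attach.sup' hS.attach fun i p => p i - a i + a u
  have hφ : Measurable φ :=
    Finset.measurable_sup' _ fun i _ => ((measurable_pi_apply i).sub_const _).add_const _
  set Y : Ω → ℝ := fun ω => φ fun i => X i ω
  have hind : IndepFun Y (X u) μ :=
    (hindep.indepFun_finset S {u} (Finset.disjoint_singleton_right.2 (Finset.notMem_erase u _))
      hX).comp (ψ := fun p : ({u} : Finset ι) → ℝ => p ⟨u, Finset.mem_singleton_self u⟩) hφ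
      (measurable_pi_apply _)
  have hmin : {ω | ∀ i, a u - X u ω ≤ a i - X i ω} = {ω | Y ω ≤ X u ω} := by
    ext ω
    simp only [mem_ofPred_eq, Y, φ, Finset.sup'_apply, Finset.sup'_le_iff, Finset.mem_attach,
      true_implies, Subtype.forall]
    refine ⟨fun h i _ => by linarith [h i], fun h i => ?_⟩
    rcases eq_or_ne i u with rfl | hi
    · rfl
    · linarith [h i (hmem hi)]
  have hgap : {ω | IsMinWithGap (fun i => a i - X i ω) t u} = {ω | Y ω + t < X u ω} := by
    ext ω
    simp only [IsMinWithGap, mem_ofPred_eq, ← lt_sub_iff_add_lt, Y, φ, Finset.sup'_apply,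
      Finset.sup'_lt_iff, Finset.mem_attach, true_implies, Subtype.forall]
    exact ⟨fun h i hi => by linarith [h i (Finset.ne_of_mem_erase hi)],
      fun h i hi => by linarith [h i (hmem hi)]⟩
  rw [hmin, hgap]
  exact ofReal_exp_mul_measure_le_le_measure_add_lt hβ (hX u) (hφ.comp (by fun_prop)) hind
    (hexp u) ht

theorem measurableSet_isMinWithGap (hX : ∀ i, Measurable (X i)) (u : ι) :
    MeasurableSet {ω | IsMinWithGap (fun i => a i - X i ω) t u} := by
  simp only [IsMinWithGap, ofPred_forall]
  exact .iInter fun i => .iInter fun _ =>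
    measurableSet_lt ((measurable_const.sub (hX u)).add_const t) (measurable_const.sub (hX i))

/-- The events "`u` minimizes `a - X`" cover the space, while the events "`u` wins by more
than `t`" are disjoint. -/
theorem ofReal_exp_le_measure_exists_isMinWithGap [Nonempty ι] (hX : ∀ i, Measurable (X i))
    (hindep : iIndepFun X μ)
    (hexp : ∀ i, ∀ s, 0 ≤ s → μ {ω | s < X i ω} = ENNReal.ofReal (Real.exp (-β * s)))
    (hβ : 0 ≤ β) (ht : 0 ≤ t) :
    ENNReal.ofReal (Real.exp (-β * t)) ≤
      μ {ω | ∃ u, IsMinWithGap (fun i => a i - X i ω) t u} := by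
  set c := ENNReal.ofReal (Real.exp (-β * t))
  set W : ι → Set Ω := fun u => {ω | ∀ i, a u - X u ω ≤ a i - X i ω}
  set E : ι → Set Ω := fun u => {ω | IsMinWithGap (fun i => a i - X i ω) t u}
  have hcover : (univ : Set Ω) ⊆ ⋃ u, W u := fun ω _ =>
    mem_iUnion.2 (Finite.exists_min fun i => a i - X i ω)
  have hdisj : Pairwise (Function.onFun Disjoint E) := fun u u' hne =>
    disjoint_left.2 fun ω hu hu' => hne (IsMinWithGap.eq (f := fun i => a i - X i ω) ht hu hu')
  calc c = c * μ univ := by rw [measure_univ, mul_one]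
    _ ≤ c * ∑' u, μ (W u) :=
        mul_le_mul_right ((measure_mono hcover).trans (measure_iUnion_le W)) _
    _ = ∑' u, c * μ (W u) := ENNReal.tsum_mul_left.symm
    _ ≤ ∑' u, μ (E u) := ENNReal.tsum_le_tsum fun u =>
        ofReal_exp_mul_measure_isMin_le_measure_isMinWithGap X a hX hindep hexp hβ ht u
    _ = μ (⋃ u, E u) := (measure_iUnion hdisj (measurableSet_isMinWithGap X a hX)).symm
    _ = μ {ω | ∃ u, IsMinWithGap (fun i => a i - X i ω) t u} := by
        simp only [E, ← ofPred_exists]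

end Independence

theorem SimpleGraph.Connected.dist_sub_lt_of_isMinWithGap {V : Type*} {G : SimpleGraph V}
    (hG : G.Connected) (l : V → ℝ) {v u w : V} {k : ℕ}
    (hu : IsMinWithGap (fun i => (G.dist i v : ℝ) - l i) (2 * k) u) (hw : G.dist v w ≤ k)
    (u' : V) (hu' : u' ≠ u) : (G.dist u w : ℝ) - l u < G.dist u' w - l u' := by
  have h₁ : (G.dist u w : ℝ) ≤ G.dist u v + G.dist v w := by exact_mod_cast hG.dist_triangle
  have h₂ : (G.dist u' v : ℝ) ≤ G.dist u' w + G.dist v w := by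
    rw [G.dist_comm (u := v)]
    exact_mod_cast hG.dist_triangle
  have hw' : (G.dist v w : ℝ) ≤ k := by exact_mod_cast hw
  linarith [hu u' hu']

/-- MPX clustering: with independent exponential shifts of rate `β`, for every
vertex `v` and radius `k`, with probability at least `1 − 2βk` there is a
single vertex `u` that is the unique center (unique minimizer of the shifted
distance) of every vertex `w` with `dist(v, w) ≤ k`. -/
theorem mpx_cluster_probability {V : Type*} [Fintype V]
    (G : SimpleGraph V) (hconn : G.Connected)
    {Ω : Type*} [MeasurableSpace Ω] (μ : Measure Ω) [IsProbabilityMeasure μ]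
    (β : ℝ) (hβ : 0 < β)
    (lam : V → Ω → ℝ) (hmeas : ∀ u, Measurable (lam u))
    (hindep : iIndepFun lam μ)
    (hexp : ∀ u, ∀ t : ℝ, 0 ≤ t →
      μ {ω | t < lam u ω} = ENNReal.ofReal (Real.exp (-β * t))) :
    ∀ (v : V) (k : ℕ),
      ENNReal.ofReal (1 - 2 * β * k) ≤
        μ {ω | ∃ u : V, ∀ w : V, G.dist v w ≤ k →
          ∀ u' : V, u' ≠ u →
            (G.dist u w : ℝ) - lam u ω < (G.dist u' w : ℝ) - lam u' ω} := by
  intro v k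
  have : Nonempty V := ⟨v⟩
  calc ENNReal.ofReal (1 - 2 * β * k) ≤ ENNReal.ofReal (Real.exp (-β * (2 * k))) :=
        ENNReal.ofReal_le_ofReal (by linarith [Real.add_one_le_exp (-β * (2 * k))])
    _ ≤ μ {ω | ∃ u, IsMinWithGap (fun i => (G.dist i v : ℝ) - lam i ω) (2 * k) u} :=
        ofReal_exp_le_measure_exists_isMinWithGap lam _ hmeas hindep hexp hβ.le (by positivity)
    _ ≤ _ := measure_mono <| by
        rintro ω ⟨u, hu⟩
        exact ⟨u, fun _ hw => hconn.dist_sub_lt_of_isMinWithGap (lam · ω) hu hw⟩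
end

section
/- For all integers Δ ≥ 1, r ≥ 1 and every real Λ > 0 there exists a constant C > 0 such that the following holds for every instance of the local-potential framework whose vertex set has n ≥ 2 elements. Let ℓ be a labeling and let (S, ℓ_S) be a minimal improving set with respect to ℓ with improving ratio β = IR(S, ℓ, ℓ_S), where 0 < β ≤ 1. Then for every 0 < ε < β and every vertex v ∈ S there exist a natural number k ≤ C·(log n)/ε and a nonempty subset A ⊆ S ∩ N_k[{v}] such that, letting ℓ_A be the labeling equal to ℓ_S on A and equal to ℓ elsewhere, IR(A, ℓ, ℓ_A) ≥ β − ε. -/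
open scoped Classical

def withinDist {V : Type*} (G : SimpleGraph V) (r : ℕ) (u v : V) : Prop :=
  ∃ p : G.Walk u v, p.length ≤ r

/-- The improving ratio `IR(A, ℓ, ℓ') = (Pot(ℓ) − Pot(ℓ'))/|A|` if `A ≠ ∅`,
and `0` if `A = ∅`. -/
noncomputable def IR {V : Type*} [Fintype V] {L : Type*}
    (Ψ : V → (V → L) → ℝ) (A : Set V) (ℓ ℓ' : V → L) : ℝ :=
  if A = ∅ then 0 else ((∑ v, Ψ v ℓ) - ∑ v, Ψ v ℓ') / A.ncard

/-!
Write `B_k = S ∩ N_k[{v}]` and `β = IR(S, ℓ, ℓS)`. Suppose relabeling only `B_k` has ratio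
below `β − ε`, and split `S` into `B_k` and `S \ B_k`. By `r`-locality, the improvement of `S` is
the sum of the improvements of the two parts up to an error of `2Λ` per vertex within
distance `r` of both parts, while minimality caps the improvement of `S \ B_k` at
`β |S \ B_k|`. Hence `ε |B_k|` is at most `2Λ` times the number of such vertices, and they lie
in the `r`-balls around `B_{k+2r} \ B_k`. So `|B_{k+2r}| ≥ (1 + ε/D) |B_k|` with
`D = 2Λ(Δ+1)^r + 1`, and as `|B_k| ≤ n` this growth can happen only `O(D log n / ε)` times
in a row.
-/

namespace withinDist

variable {V : Type*} {G : SimpleGraph V} {k m : ℕ} {u v w : V}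

lemma refl (G : SimpleGraph V) (k : ℕ) (u : V) : withinDist G k u u := ⟨.nil, by simp⟩

lemma symm (h : withinDist G k u v) : withinDist G k v u :=
  let ⟨p, hp⟩ := h; ⟨p.reverse, by simpa using hp⟩

lemma mono (hkm : k ≤ m) (h : withinDist G k u v) : withinDist G m u v :=
  let ⟨p, hp⟩ := h; ⟨p, hp.trans hkm⟩

lemma trans (huv : withinDist G k u v) (hvw : withinDist G m v w) :
    withinDist G (k + m) u w :=
  let ⟨p, hp⟩ := huv; let ⟨q, hq⟩ := hvw; ⟨p.append q, by simp; omega⟩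

lemma succ_iff : withinDist G (k + 1) u v ↔ u = v ∨ ∃ w, G.Adj u w ∧ withinDist G k w v := by
  constructor
  · rintro ⟨p, hp⟩
    cases p with
    | nil => exact .inl rfl
    | cons hadj q => exact .inr ⟨_, hadj, q, by simpa using hp⟩
  · rintro (rfl | ⟨w, hadj, q, hq⟩)
    · exact refl G _ u
    · exact ⟨.cons hadj q, by simpa using hq⟩

end withinDist

lemma Set.ncard_biUnion_le_mul {ι α : Type*} {t : Set ι} (ht : t.Finite) {s : ι → Set α}
    {m : ℕ} (hs : ∀ i ∈ t, (s i).ncard ≤ m) : (⋃ i ∈ t, s i).ncard ≤ t.ncard * m := by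
  have := ht.toFinset.set_ncard_biUnion_le s
  simp only [Set.Finite.mem_toFinset] at this
  refine this.trans ?_
  rw [Set.ncard_eq_toFinset_card t ht, ← smul_eq_mul]
  exact Finset.sum_le_card_nsmul _ _ _ fun i hi => hs i (by simpa using hi)

lemma ncard_withinDist_le_pow {V : Type*} [Finite V] {G : SimpleGraph V} {Δ : ℕ}
    (hdeg : ∀ v, (G.neighborSet v).ncard ≤ Δ) (k : ℕ) (s : V) :
    {u | withinDist G k s u}.ncard ≤ (Δ + 1) ^ k := by
  induction k generalizing s with
  | zero =>
    have : {u | withinDist G 0 s u} = {s} := by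
      ext u
      exact ⟨fun ⟨p, hp⟩ => (p.eq_of_length_eq_zero (by omega)).symm, fun h => h ▸ .refl G 0 s⟩
    simp [this]
  | succ k ih =>
    have hsub : {u | withinDist G (k + 1) s u} =
        insert s (⋃ w ∈ G.neighborSet s, {u | withinDist G k w u}) := by
      ext u
      simp [withinDist.succ_iff, eq_comm]
    calc {u | withinDist G (k + 1) s u}.ncard
        ≤ (⋃ w ∈ G.neighborSet s, {u | withinDist G k w u}).ncard + 1 := by
          rw [hsub]; exact Set.ncard_insert_le _ _
      _ ≤ Δ * (Δ + 1) ^ k + 1 := by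
          gcongr
          exact (Set.ncard_biUnion_le_mul (Set.toFinite _) fun w _ => ih w).trans
            (Nat.mul_le_mul_right _ (hdeg s))
      _ ≤ (Δ + 1) ^ (k + 1) := by
          rw [pow_succ]; nlinarith [Nat.one_le_pow k (Δ + 1) (by omega)]

section Locality

variable {V L : Type*} {G : SimpleGraph V} {r : ℕ} {Ψ : V → (V → L) → ℝ} {ℓ ℓS : V → L}
  {A B : Set V}

def interfaceVertices (G : SimpleGraph V) (r : ℕ) (A B : Set V) : Set V :=
  {w | (∃ u ∈ A, withinDist G r w u) ∧ ∃ u ∈ B, withinDist G r w u}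

def IsLocal (G : SimpleGraph V) (r : ℕ) (Ψ : V → (V → L) → ℝ) : Prop :=
  ∀ v (ℓ ℓ' : V → L), (∀ u, withinDist G r v u → ℓ u = ℓ' u) → Ψ v ℓ = Ψ v ℓ'

lemma potential_piecewise_eq_of_far (hloc : IsLocal G r Ψ)
    (hS : ∀ u ∉ A ∪ B, ℓS u = ℓ u) {w : V} (hfar : ∀ u ∈ B, ¬ withinDist G r w u) :
    Ψ w (A.piecewise ℓS ℓ) = Ψ w ℓS ∧ Ψ w (B.piecewise ℓS ℓ) = Ψ w ℓ := by
  constructor <;> apply hloc <;> intro u hu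
  · by_cases huA : u ∈ A
    · simp [huA]
    · have huB : u ∉ B := fun h => hfar u h hu
      simp [huA, hS u (by simp [huA, huB])]
  · exact Set.piecewise_eq_of_notMem _ _ _ fun h => hfar u h hu

lemma potential_piecewise_add_eq (hloc : IsLocal G r Ψ)
    (hS : ∀ u ∉ A ∪ B, ℓS u = ℓ u) {w : V} (hw : w ∉ interfaceVertices G r A B) :
    Ψ w (A.piecewise ℓS ℓ) + Ψ w (B.piecewise ℓS ℓ) = Ψ w ℓS + Ψ w ℓ := by
  simp only [interfaceVertices, Set.mem_ofPred_eq, not_and, not_exists] at hw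
  by_cases hA : ∃ u ∈ A, withinDist G r w u
  · obtain ⟨hA, hB⟩ := potential_piecewise_eq_of_far hloc hS (hw hA)
    rw [hA, hB]
  · push Not at hA
    obtain ⟨hB, hA⟩ := potential_piecewise_eq_of_far hloc (Set.union_comm A B ▸ hS) hA
    rw [hA, hB, add_comm]

end Locality

section Potential

variable {V L : Type*} [Fintype V] {G : SimpleGraph V} {r : ℕ} {Λ : ℝ}
  {Ψ : V → (V → L) → ℝ} {ℓ ℓS : V → L} {S A B : Set V}

noncomputable def improvement (Ψ : V → (V → L) → ℝ) (ℓ ℓ' : V → L) : ℝ :=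
  ∑ v, Ψ v ℓ - ∑ v, Ψ v ℓ'

lemma IR_eq_improvement_div (hA : A.Nonempty) (ℓ ℓ' : V → L) :
    IR Ψ A ℓ ℓ' = improvement Ψ ℓ ℓ' / A.ncard := by
  rw [IR, if_neg hA.ne_empty, improvement]

def IsRatioMinimal (Ψ : V → (V → L) → ℝ) (ℓ : V → L) (S : Set V) (ℓS : V → L) : Prop :=
  ¬ ∃ (A' : Set V) (ℓ' : V → L),
    A' ⊂ S ∧ (∀ v ∉ A', ℓ' v = ℓ v) ∧ (∑ v, Ψ v ℓ') < (∑ v, Ψ v ℓ) ∧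
    IR Ψ S ℓ ℓS < IR Ψ A' ℓ ℓ'

lemma IsRatioMinimal.improvement_piecewise_le (hmin : IsRatioMinimal Ψ ℓ S ℓS)
    (hβ : 0 ≤ IR Ψ S ℓ ℓS) {C : Set V} (hC : C ⊂ S) :
    improvement Ψ ℓ (C.piecewise ℓS ℓ) ≤ IR Ψ S ℓ ℓS * C.ncard := by
  by_cases himp : 0 < improvement Ψ ℓ (C.piecewise ℓS ℓ)
  · have hCne : C.Nonempty := by
      refine Set.nonempty_iff_ne_empty.mpr fun hC0 => ?_
      subst hC0
      simp [improvement] at himp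
    have hCpos : (0 : ℝ) < C.ncard := by exact_mod_cast hCne.ncard_pos
    have hIR : IR Ψ C ℓ (C.piecewise ℓS ℓ) ≤ IR Ψ S ℓ ℓS := not_lt.mp fun hlt =>
      hmin ⟨C, _, hC, fun _ hv => Set.piecewise_eq_of_notMem _ _ _ hv,
        by rw [improvement] at himp; linarith, hlt⟩
    rwa [IR_eq_improvement_div hCne, div_le_iff₀ hCpos] at hIR
  · exact (not_lt.mp himp).trans (by positivity)

lemma improvement_le_add_piecewise (hloc : IsLocal G r Ψ)
    (hbnd : ∀ v ℓ, 0 ≤ Ψ v ℓ ∧ Ψ v ℓ ≤ Λ) (hS : ∀ u ∉ A ∪ B, ℓS u = ℓ u) :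
    improvement Ψ ℓ ℓS ≤ improvement Ψ ℓ (A.piecewise ℓS ℓ) +
      improvement Ψ ℓ (B.piecewise ℓS ℓ) + 2 * Λ * (interfaceVertices G r A B).ncard := by
  set T := interfaceVertices G r A B
  set defect : V → ℝ := fun w =>
    Ψ w (A.piecewise ℓS ℓ) + Ψ w (B.piecewise ℓS ℓ) - Ψ w ℓS - Ψ w ℓ
  have hdefect : ∑ w, defect w ≤ T.toFinset.card • (2 * Λ) := by
    rw [← Finset.sum_subset (Finset.subset_univ T.toFinset) fun w _ hw => by
      simp only [defect, potential_piecewise_add_eq hloc hS (by simpa using hw)]; ring]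
    refine Finset.sum_le_card_nsmul _ _ _ fun w _ => ?_
    have := hbnd w (A.piecewise ℓS ℓ); have := hbnd w (B.piecewise ℓS ℓ)
    have := hbnd w ℓS; have := hbnd w ℓ
    simp only [defect]; linarith
  simp only [defect, Finset.sum_sub_distrib, Finset.sum_add_distrib, nsmul_eq_mul,
    ← Set.ncard_eq_toFinset_card'] at hdefect
  simp only [improvement]
  linarith

lemma ncard_mul_le_of_IR_lt (hloc : IsLocal G r Ψ) (hbnd : ∀ v ℓ, 0 ≤ Ψ v ℓ ∧ Ψ v ℓ ≤ Λ)
    (hS : ∀ u ∉ S, ℓS u = ℓ u) (hmin : IsRatioMinimal Ψ ℓ S ℓS) (hβ : 0 ≤ IR Ψ S ℓ ℓS)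
    (hAS : A ⊆ S) (hA : A.Nonempty) {ε : ℝ}
    (hIR : IR Ψ A ℓ (A.piecewise ℓS ℓ) < IR Ψ S ℓ ℓS - ε) :
    ε * A.ncard ≤ 2 * Λ * (interfaceVertices G r A (S \ A)).ncard := by
  have hsplit := improvement_le_add_piecewise (A := A) (B := S \ A) hloc hbnd
    fun u hu => hS u (by rwa [Set.union_sdiff_cancel hAS] at hu)
  have hC := hmin.improvement_piecewise_le hβ (hAS.sdiff_ssubset_of_nonempty hA)
  have hApos : (0 : ℝ) < A.ncard := by exact_mod_cast hA.ncard_pos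
  have hSpos : (0 : ℝ) < S.ncard := by exact_mod_cast (hA.mono hAS).ncard_pos
  rw [IR_eq_improvement_div hA, div_lt_iff₀ hApos, sub_mul] at hIR
  have hScard : (S.ncard : ℝ) = (S \ A).ncard + A.ncard := by
    exact_mod_cast (Set.ncard_sdiff_add_ncard_of_subset hAS).symm
  have hβS : improvement Ψ ℓ ℓS = IR Ψ S ℓ ℓS * S.ncard := by
    rw [IR_eq_improvement_div (hA.mono hAS), div_mul_cancel₀ _ hSpos.ne']
  rw [hScard, mul_add] at hβS
  linarith

end Potential

section Balls

variable {V L : Type*} {G : SimpleGraph V} {S : Set V} {v : V} {k : ℕ}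

def ballInter (G : SimpleGraph V) (S : Set V) (v : V) (k : ℕ) : Set V :=
  S ∩ {u | withinDist G k u v}

lemma ballInter_mono {m : ℕ} (hkm : k ≤ m) : ballInter G S v k ⊆ ballInter G S v m :=
  fun _ hu => ⟨hu.1, hu.2.mono hkm⟩

lemma mem_ballInter_self (hv : v ∈ S) : v ∈ ballInter G S v k := ⟨hv, .refl G k v⟩

lemma interfaceVertices_ballInter_subset (r : ℕ) :
    interfaceVertices G r (ballInter G S v k) (S \ ballInter G S v k) ⊆
      ⋃ u ∈ ballInter G S v (k + 2 * r) \ ballInter G S v k, {w | withinDist G r u w} := by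
  rintro w ⟨⟨u, ⟨-, huv⟩, hwu⟩, ⟨x, ⟨hxS, hxk⟩, hwx⟩⟩
  refine Set.mem_biUnion ⟨⟨hxS, ?_⟩, hxk⟩ hwx.symm
  exact ((hwx.symm.trans hwu).trans huv).mono (by omega)

lemma ncard_interfaceVertices_ballInter_le [Finite V] {Δ : ℕ}
    (hdeg : ∀ v, (G.neighborSet v).ncard ≤ Δ) (r : ℕ) :
    (interfaceVertices G r (ballInter G S v k) (S \ ballInter G S v k)).ncard ≤
      ((ballInter G S v (k + 2 * r)).ncard - (ballInter G S v k).ncard) * (Δ + 1) ^ r := by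
  rw [← Set.ncard_sdiff (ballInter_mono (by omega))]
  exact (Set.ncard_le_ncard (interfaceVertices_ballInter_subset r)).trans
    (Set.ncard_biUnion_le_mul (Set.toFinite _) fun u _ => ncard_withinDist_le_pow hdeg r u)

lemma ncard_ballInter_growth [Fintype V] {r Δ : ℕ} {Λ ε : ℝ} {Ψ : V → (V → L) → ℝ}
    {ℓ ℓS : V → L} (hloc : IsLocal G r Ψ) (hbnd : ∀ v ℓ, 0 ≤ Ψ v ℓ ∧ Ψ v ℓ ≤ Λ)
    (hdeg : ∀ v, (G.neighborSet v).ncard ≤ Δ) (hS : ∀ u ∉ S, ℓS u = ℓ u)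
    (hmin : IsRatioMinimal Ψ ℓ S ℓS) (hβ : 0 ≤ IR Ψ S ℓ ℓS) (hv : v ∈ S)
    (hIR : IR Ψ (ballInter G S v k) ℓ ((ballInter G S v k).piecewise ℓS ℓ) <
      IR Ψ S ℓ ℓS - ε) :
    (1 + ε / (2 * Λ * (Δ + 1) ^ r + 1)) * (ballInter G S v k).ncard ≤
      (ballInter G S v (k + 2 * r)).ncard := by
  have hΛ : 0 ≤ Λ := (hbnd v ℓ).1.trans (hbnd v ℓ).2
  set x : ℝ := ((ballInter G S v k).ncard : ℝ)
  set y : ℝ := ((ballInter G S v (k + 2 * r)).ncard : ℝ)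
  have hxy : (ballInter G S v k).ncard ≤ (ballInter G S v (k + 2 * r)).ncard :=
    Set.ncard_le_ncard (ballInter_mono (by omega))
  have hT := ncard_interfaceVertices_ballInter_le (S := S) (v := v) (k := k) hdeg r
  rw [← Nat.cast_le (α := ℝ), Nat.cast_mul, Nat.cast_sub hxy] at hT
  push_cast at hT
  have hεx : ε * x ≤ 2 * Λ * (Δ + 1) ^ r * (y - x) := calc
    ε * x ≤ 2 * Λ * (interfaceVertices G r (ballInter G S v k) (S \ ballInter G S v k)).ncard :=
        ncard_mul_le_of_IR_lt hloc hbnd hS hmin hβ Set.inter_subset_left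
          ⟨v, mem_ballInter_self hv⟩ hIR
    _ ≤ _ := by rw [mul_assoc _ _ (_ - _), mul_comm (_ ^ r)]; gcongr
  have hxy' : x ≤ y := Nat.cast_le.mpr hxy
  have hdiv : ε * x / (2 * Λ * (Δ + 1) ^ r + 1) ≤ y - x := by
    rw [div_le_iff₀ (by positivity)]; nlinarith
  linarith [show (1 + ε / (2 * Λ * (Δ + 1) ^ r + 1)) * x =
    x + ε * x / (2 * Λ * (Δ + 1) ^ r + 1) by ring]

end Balls

lemma half_le_log_one_add {c : ℝ} (hc0 : 0 ≤ c) (hc1 : c ≤ 1) : c / 2 ≤ Real.log (1 + c) := by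
  refine le_trans ?_ (Real.one_sub_inv_le_log_of_pos (by linarith))
  rw [div_le_iff₀ two_pos, ← sub_nonneg]
  field_simp
  nlinarith

lemma exists_le_two_mul_log_div_of_growth {P : ℕ → Prop} {a : ℕ → ℝ} {c n : ℝ}
    (hc0 : 0 < c) (hc1 : c ≤ 1) (ha0 : 1 ≤ a 0) (han : ∀ i, a i ≤ n)
    (hgrow : ∀ i, ¬ P i → (1 + c) * a i ≤ a (i + 1)) :
    ∃ i : ℕ, (i : ℝ) ≤ 2 * Real.log n / c ∧ P i := by
  set M := ⌊2 * Real.log n / c⌋₊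
  have hlogn : 0 ≤ Real.log n := Real.log_nonneg (ha0.trans (han 0))
  by_contra! hnone
  have hpow : ∀ m ≤ M + 1, (1 + c) ^ m ≤ a m := by
    intro m hm
    induction m with
    | zero => simpa using ha0
    | succ m ih =>
      have hPm : ¬ P m := hnone m ((Nat.le_floor_iff (by positivity)).mp (by omega))
      calc (1 + c) ^ (m + 1) = (1 + c) * (1 + c) ^ m := pow_succ' _ _
        _ ≤ (1 + c) * a m := by gcongr; exact ih (by omega)
        _ ≤ a (m + 1) := hgrow m hPm
  have hlog : (M + 1 : ℝ) * (c / 2) ≤ Real.log n := by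
    calc (M + 1 : ℝ) * (c / 2) ≤ (M + 1 : ℝ) * Real.log (1 + c) := by
          gcongr; exact half_le_log_one_add hc0.le hc1
      _ = Real.log ((1 + c) ^ (M + 1)) := by rw [Real.log_pow]; push_cast; ring
      _ ≤ Real.log n := Real.log_le_log (by positivity) ((hpow _ le_rfl).trans (han _))
  have hM : 2 * Real.log n / c < M + 1 := Nat.lt_floor_add_one _
  rw [div_lt_iff₀ hc0] at hM
  linarith

theorem imprBalls_general (Δ r : ℕ) (hr : 1 ≤ r) (Λ : ℝ) (hΛ : 0 < Λ) :
    ∃ C : ℝ, 0 < C ∧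
      ∀ (V : Type) [Fintype V], ∀ (G : SimpleGraph V),
        (∀ v, (G.neighborSet v).ncard ≤ Δ) →
        2 ≤ Fintype.card V →
        ∀ (L : Type) [Fintype L] [Nonempty L], ∀ (Ψ : V → (V → L) → ℝ),
          (∀ v (ℓ ℓ' : V → L),
            (∀ u, withinDist G r v u → ℓ u = ℓ' u) → Ψ v ℓ = Ψ v ℓ') →
          (∀ v ℓ, 0 ≤ Ψ v ℓ ∧ Ψ v ℓ ≤ Λ) →
          ∀ (ℓ ℓS : V → L) (S : Set V),
            (∀ v ∉ S, ℓS v = ℓ v) →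
            (∑ v, Ψ v ℓS) < (∑ v, Ψ v ℓ) →
            (¬ ∃ (A' : Set V) (ℓ' : V → L),
              A' ⊂ S ∧ (∀ v ∉ A', ℓ' v = ℓ v) ∧
              (∑ v, Ψ v ℓ') < (∑ v, Ψ v ℓ) ∧
              IR Ψ S ℓ ℓS < IR Ψ A' ℓ ℓ') →
            0 < IR Ψ S ℓ ℓS → IR Ψ S ℓ ℓS ≤ 1 →
            ∀ ε : ℝ, 0 < ε → ε < IR Ψ S ℓ ℓS →
              ∀ v ∈ S,
                ∃ k : ℕ, (k : ℝ) ≤ C * Real.log (Fintype.card V) / ε ∧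
                  ∃ A : Set V, A.Nonempty ∧
                    A ⊆ S ∩ {u | withinDist G k u v} ∧
                    IR Ψ S ℓ ℓS - ε ≤
                      IR Ψ A ℓ (fun u => if u ∈ A then ℓS u else ℓ u) := by
  set D : ℝ := 2 * Λ * (Δ + 1) ^ r + 1
  have hD : 1 ≤ D := le_add_of_nonneg_left (by positivity)
  refine ⟨4 * r * D, by positivity, ?_⟩
  intro V _ G hdeg _ L _ _ Ψ hloc hbnd ℓ ℓS S hS _ hmin hβ0 hβ1 ε hε hεβ v hv
  set n : ℝ := (Fintype.card V : ℝ)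
  set B : ℕ → Set V := fun i => ballInter G S v (2 * r * i)
  have hB0 : (1 : ℝ) ≤ (B 0).ncard :=
    Nat.one_le_cast.mpr (show (B 0).Nonempty from ⟨v, mem_ballInter_self hv⟩).ncard_pos
  have hBn (i : ℕ) : ((B i).ncard : ℝ) ≤ n :=
    Nat.cast_le.mpr ((Set.ncard_le_card (B i)).trans_eq Nat.card_eq_fintype_card)
  have hgrow (i : ℕ) (hi : ¬ IR Ψ S ℓ ℓS - ε ≤ IR Ψ (B i) ℓ ((B i).piecewise ℓS ℓ)) :
      (1 + ε / D) * (B i).ncard ≤ (B (i + 1)).ncard := by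
    simpa only [B, mul_add, mul_one] using
      ncard_ballInter_growth hloc hbnd hdeg hS hmin hβ0.le hv (not_le.mp hi)
  obtain ⟨i, hi, hgood⟩ := exists_le_two_mul_log_div_of_growth (div_pos hε (by positivity))
    ((div_le_one (by positivity)).mpr (by linarith)) hB0 hBn hgrow
  refine ⟨2 * r * i, ?_, B i, ⟨v, mem_ballInter_self hv⟩, subset_rfl, hgood⟩
  calc ((2 * r * i : ℕ) : ℝ) = 2 * r * i := by push_cast; ring
    _ ≤ 2 * r * (2 * Real.log n / (ε / D)) := by gcongr
    _ = 4 * r * D * Real.log n / ε := by field_simp; ring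

/-- For all `Δ, r ≥ 1` and `Λ > 0` there is a constant `C > 0` such that, in
every local-potential instance on `n ≥ 2` vertices: if `(S, ℓS)` is a minimal
improving set with improving ratio `β = IR(S, ℓ, ℓS)`, `0 < β ≤ 1`, then for
every `0 < ε < β` and every `v ∈ S`, there are `k ≤ C·(log n)/ε` and a
nonempty `A ⊆ S ∩ N_k[{v}]` such that the labeling `ℓA` equal to `ℓS` on `A`
and to `ℓ` elsewhere satisfies `IR(A, ℓ, ℓA) ≥ β − ε`. -/
theorem imprBalls (Δ r : ℕ) (hΔ : 1 ≤ Δ) (hr : 1 ≤ r) (Λ : ℝ) (hΛ : 0 < Λ) :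
    ∃ C : ℝ, 0 < C ∧
      ∀ (V : Type) [Fintype V], ∀ (G : SimpleGraph V),
        (∀ v, (G.neighborSet v).ncard ≤ Δ) →
        2 ≤ Fintype.card V →
        ∀ (L : Type) [Fintype L] [Nonempty L], ∀ (Ψ : V → (V → L) → ℝ),
          (∀ v (ℓ ℓ' : V → L),
            (∀ u, withinDist G r v u → ℓ u = ℓ' u) → Ψ v ℓ = Ψ v ℓ') →
          (∀ v ℓ, 0 ≤ Ψ v ℓ ∧ Ψ v ℓ ≤ Λ) →
          ∀ (ℓ ℓS : V → L) (S : Set V),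
            (∀ v ∉ S, ℓS v = ℓ v) →
            (∑ v, Ψ v ℓS) < (∑ v, Ψ v ℓ) →
            (¬ ∃ (A' : Set V) (ℓ' : V → L),
              A' ⊂ S ∧ (∀ v ∉ A', ℓ' v = ℓ v) ∧
              (∑ v, Ψ v ℓ') < (∑ v, Ψ v ℓ) ∧
              IR Ψ S ℓ ℓS < IR Ψ A' ℓ ℓ') →
            0 < IR Ψ S ℓ ℓS → IR Ψ S ℓ ℓS ≤ 1 →
            ∀ ε : ℝ, 0 < ε → ε < IR Ψ S ℓ ℓS →
              ∀ v ∈ S,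
                ∃ k : ℕ, (k : ℝ) ≤ C * Real.log (Fintype.card V) / ε ∧
                  ∃ A : Set V, A.Nonempty ∧
                    A ⊆ S ∩ {u | withinDist G k u v} ∧
                    IR Ψ S ℓ ℓS - ε ≤
                      IR Ψ A ℓ (fun u => if u ∈ A then ℓS u else ℓ u) :=
  imprBalls_general Δ r hr Λ hΛ
end

section
/- Let G = (V, E) be a finite simple graph with maximum degree at most Δ ≥ 1, let S ⊆ V, let v ∈ S, and for each natural number i let C_i = {u ∈ S : dist(u, v) ≤ i}. Then for every i, |C_{i+1}| ≥ |C_i| + |E(C_i, S ∖ C_i)| / Δ, where E(X, Y) denotes the set of edges of G with one endpoint in X and the other endpoint in Y. -/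
/-- Ball-growing: in a graph of maximum degree at most `Δ`, for `S ⊆ V`,
`v ∈ S`, and `C i = {u ∈ S : dist(u, v) ≤ i}`, one has
`|C (i+1)| ≥ |C i| + |E(C i, S ∖ C i)| / Δ`. -/
theorem ball_growing {V : Type*} [Fintype V]
    (G : SimpleGraph V) (Δ : ℕ) (hΔ : 1 ≤ Δ)
    (hdeg : ∀ v, (G.neighborSet v).ncard ≤ Δ)
    (S : Set V) (v : V) (hv : v ∈ S) (i : ℕ) :
    (({u ∈ S | G.dist u v ≤ i} : Set V).ncard : ℝ) +
        (({e | e ∈ G.edgeSet ∧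
            ∃ a ∈ ({u ∈ S | G.dist u v ≤ i} : Set V),
            ∃ b ∈ S \ ({u ∈ S | G.dist u v ≤ i} : Set V),
            e = s(a, b)} : Set (Sym2 V)).ncard : ℝ) / Δ ≤
      (({u ∈ S | G.dist u v ≤ i + 1} : Set V).ncard : ℝ) := by
  classical
  set Ci : Set V := {u ∈ S | G.dist u v ≤ i} with hCi
  set Ci1 : Set V := {u ∈ S | G.dist u v ≤ i + 1} with hCi1
  set E : Set (Sym2 V) := {e | e ∈ G.edgeSet ∧
      ∃ a ∈ Ci, ∃ b ∈ S \ Ci, e = s(a, b)} with hE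
  set N : Set V := Ci1 \ Ci with hN
  have hsub : Ci ⊆ Ci1 := fun u hu => ⟨hu.1, hu.2.trans (Nat.le_succ i)⟩
  -- distance bound for the outer endpoint of an edge in E
  have hdistb : ∀ a b : V, G.Adj a b → G.dist a v ≤ i → G.dist b v ≤ i + 1 := by
    intro a b hab ha
    by_cases hr : G.Reachable b v
    · have hra : G.Reachable a v := hab.reachable.trans hr
      obtain ⟨p, hp⟩ := hra.exists_walk_length_eq_dist
      have hle := G.dist_le (SimpleGraph.Walk.cons hab.symm p)
      rw [SimpleGraph.Walk.length_cons, hp] at hle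
      omega
    · simp [SimpleGraph.dist_eq_zero_of_not_reachable hr]
  -- each edge's outer endpoint lies in N
  have houter : ∀ e ∈ E, ∃ b ∈ N, b ∈ e := by
    rintro e ⟨he, a, ha, b, hb, rfl⟩
    refine ⟨b, ⟨⟨hb.1, ?_⟩, hb.2⟩, by simp⟩
    have hab : G.Adj a b := by simpa using he
    exact hdistb a b hab ha.2
  -- the key counting: |E| ≤ Δ * |N|
  have hcount : E.ncard ≤ Δ * N.ncard := by
    have hEfin : E.Finite := Set.toFinite _
    have hNfin : N.Finite := Set.toFinite _
    set f : Sym2 V → V := fun e => if h : ∃ b ∈ N, b ∈ e then h.choose else v with hf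
    have hmaps : ∀ e ∈ hEfin.toFinset, f e ∈ hNfin.toFinset := by
      intro e he
      rw [Set.Finite.mem_toFinset] at he ⊢
      have h := houter e he
      simp only [hf, dif_pos h]
      exact h.choose_spec.1
    have hfiber : ∀ b ∈ hNfin.toFinset,
        (hEfin.toFinset.filter fun e => f e = b).card ≤ Δ := by
      intro b _
      have hss : (hEfin.toFinset.filter fun e => f e = b) ⊆
          (G.incidenceSet b).toFinset := by
        intro e he
        rw [Finset.mem_filter, Set.Finite.mem_toFinset] at he
        rw [Set.mem_toFinset]
        obtain ⟨heE, hfe⟩ := he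
        have h := houter e heE
        have hbe : b ∈ e := by
          have : f e = h.choose := by simp only [hf, dif_pos h]
          rw [← hfe, this]; exact h.choose_spec.2
        exact ⟨heE.1, hbe⟩
      refine (Finset.card_le_card hss).trans ?_
      have hdegb : (G.incidenceSet b).toFinset.card = G.degree b := by
        rw [Set.toFinset_card, SimpleGraph.card_incidenceSet_eq_degree]
      rw [hdegb]
      have := hdeg b
      rwa [Set.ncard_eq_toFinset_card', Set.toFinset_card,
        SimpleGraph.card_neighborSet_eq_degree] at this
    have hmain := Finset.card_le_mul_card_image_of_maps_to hmaps Δ hfiber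
    calc E.ncard = hEfin.toFinset.card := Set.ncard_eq_toFinset_card E hEfin
      _ ≤ Δ * hNfin.toFinset.card := hmain
      _ = Δ * N.ncard := by rw [Set.ncard_eq_toFinset_card N hNfin]
  -- finish with real arithmetic
  have hsplit : Ci.ncard + N.ncard = Ci1.ncard := by
    rw [hN, add_comm]
    exact Set.ncard_diff_add_ncard_of_subset hsub (Set.toFinite _)
  have hΔpos : (0:ℝ) < Δ := by exact_mod_cast hΔ
  have hdiv : (E.ncard : ℝ) / Δ ≤ (N.ncard : ℝ) := by
    rw [div_le_iff₀ hΔpos]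
    calc (E.ncard : ℝ) ≤ (Δ * N.ncard : ℕ) := by exact_mod_cast hcount
      _ = (N.ncard : ℝ) * Δ := by push_cast; ring
  have : (Ci.ncard : ℝ) + (E.ncard : ℝ) / Δ ≤ (Ci.ncard : ℝ) + N.ncard := by
    linarith
  calc (Ci.ncard : ℝ) + (E.ncard : ℝ) / Δ ≤ (Ci.ncard : ℝ) + N.ncard := this
    _ = (Ci1.ncard : ℝ) := by exact_mod_cast congrArg Nat.cast hsplit
end
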